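/- Let c, p ∈ ℝ² and let r_c > 0 with R := dist(p, c) ≤ r_c and R > 0. Let X be a random point distributed uniformly on the closed disk of center c and radius r_c. Then the cumulative distribution function F(r) = P(dist(X, p) ≤ r) is differentiable at every r with r_c − R < r < r_c + R, and its derivative equals f(r) = (2r/(π r_c²)) · arccos((R² + r² − r_c²)/(2 R r)). -/

import Mathlib

/-!
An isometry of the plane onto `ℂ` moves `p` to `0` and `c` to the positive real `R`. In polar
coordinates about `0`, the circle of radius `ρ` meets the disk `closedBall R r_c` in the arc
`|θ| ≤ arccos ((R² + ρ² - r_c²) / (2Rρ))` (law of cosines), so the area of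
`closedBall 0 r ∩ closedBall R r_c` is `∫₀ʳ 2ρ arccos (…) dρ`; since `arccos` is clamped to `π`
below `-1` and to `0` above `1`, this also covers circles lying entirely inside or outside the
disk. The fundamental theorem of calculus then gives the density.
-/

open MeasureTheory Real Set Metric Module

theorem exists_linearIsometryEquiv_complex_apply_eq_norm {E : Type*} [NormedAddCommGroup E]
    [InnerProductSpace ℝ E] (hE : finrank ℝ E = 2) (v : E) :
    ∃ e : E ≃ₗᵢ[ℝ] ℂ, e v = ‖v‖ := by
  have hcard : finrank ℝ E = Fintype.card (Fin 2) := by simpa using hE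
  have : FiniteDimensional ℝ E := .of_finrank_pos (by omega)
  by_cases hv : v = 0
  · obtain ⟨b, -⟩ := Orthonormal.exists_orthonormalBasis_extension_of_card_eq hcard
      (v := fun _ => v) (s := ∅) ⟨fun i => i.2.elim, fun i => i.2.elim⟩
    exact ⟨b.equiv Complex.orthonormalBasisOneI (Equiv.refl _), by simp [hv]⟩
  · set u := ‖v‖⁻¹ • v
    have hu : ‖u‖ = 1 := norm_smul_inv_norm hv
    obtain ⟨b, hb⟩ := Orthonormal.exists_orthonormalBasis_extension_of_card_eq hcard
      (v := fun _ => u) (s := {0}) ⟨fun _ => hu, fun i j hij => (hij (Subsingleton.elim i j)).elim⟩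
    refine ⟨b.equiv Complex.orthonormalBasisOneI (Equiv.refl _), ?_⟩
    have hvu : v = ‖v‖ • u := by simp [u, smul_smul, norm_ne_zero_iff.mpr hv]
    conv_lhs => rw [hvu, map_smul, ← hb 0 rfl]
    simp

theorem volume_closedBall_inter_closedBall_eq_complex {E : Type*} [NormedAddCommGroup E]
    [InnerProductSpace ℝ E] [FiniteDimensional ℝ E] [MeasurableSpace E] [BorelSpace E]
    (hE : finrank ℝ E = 2) (p c : E) (r s : ℝ) :
    volume (closedBall p r ∩ closedBall c s) =
      volume (closedBall (0 : ℂ) r ∩ closedBall (dist p c : ℂ) s) := by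
  obtain ⟨e, he⟩ := exists_linearIsometryEquiv_complex_apply_eq_norm hE (c - p)
  have hΦ : MeasurePreserving (fun x => e (x - p)) :=
    e.measurePreserving.comp (measurePreserving_sub_right volume p)
  have hpre : closedBall p r ∩ closedBall c s =
      (fun x => e (x - p)) ⁻¹' (closedBall 0 r ∩ closedBall (dist p c : ℂ) s) := by
    ext x
    have hxp : dist (e (x - p)) 0 = dist x p := by
      rw [dist_zero_right, LinearIsometryEquiv.norm_map, dist_eq_norm]
    have hxc : dist (e (x - p)) (dist p c : ℂ) = dist x c := by
      rw [dist_comm p, dist_eq_norm c p, ← he, dist_eq_norm, ← map_sub, sub_sub_sub_cancel_right,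
        LinearIsometryEquiv.norm_map, dist_eq_norm]
    simp only [mem_inter_iff, mem_closedBall, mem_preimage, hxp, hxc]
  rw [hpre, hΦ.measure_preimage
    (measurableSet_closedBall.inter measurableSet_closedBall).nullMeasurableSet]

theorem volume_setOf_le_cos_inter_Ioo (t : ℝ) :
    volume ({θ | t ≤ cos θ} ∩ Ioo (-π) π) = ENNReal.ofReal (2 * arccos t) := by
  have hvol : ENNReal.ofReal (2 * arccos t) = ENNReal.ofReal (arccos t - -arccos t) := by ring_nf
  apply le_antisymm
  · rw [hvol, ← Real.volume_Icc]
    refine measure_mono fun θ ⟨ht, hθ₁, hθ₂⟩ => abs_le.mp ?_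
    calc |θ| = arccos (cos θ) := by
          rw [← cos_abs, arccos_cos (abs_nonneg θ) (abs_le.mpr ⟨hθ₁.le, hθ₂.le⟩)]
      _ ≤ arccos t := arccos_le_arccos ht
  · rw [hvol, ← Real.volume_Ioo]
    refine measure_mono fun θ hθ => ?_
    have habs : |θ| < arccos t := abs_lt.mpr hθ
    have hpi := arccos_le_pi t
    refine ⟨?_, abs_lt.mp (habs.trans_le hpi)⟩
    rcases lt_or_ge t (-1) with ht | ht
    · exact ht.le.trans (neg_one_le_cos θ)
    · have ht₁ : t < 1 := arccos_pos.mp ((abs_nonneg θ).trans_lt habs)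
      calc t = cos (arccos t) := (cos_arccos ht ht₁.le).symm
        _ ≤ cos |θ| := cos_le_cos_of_nonneg_of_le_pi (abs_nonneg θ) hpi habs.le
        _ = cos θ := cos_abs θ

theorem Complex.volume_eq_setLIntegral_polarCoord {S : Set ℂ} (hS : MeasurableSet S) :
    volume S = ∫⁻ ρ in Ioi 0, ENNReal.ofReal ρ *
      volume ({θ | Complex.polarCoord.symm (ρ, θ) ∈ S} ∩ Ioo (-π) π) := by
  have hsymm : Measurable Complex.polarCoord.symm :=
    measurableEquivRealProd.symm.measurable.comp continuous_polarCoord_symm.measurable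
  have hint : Measurable fun q : ℝ × ℝ =>
      ENNReal.ofReal q.1 • S.indicator (1 : ℂ → ENNReal) (Complex.polarCoord.symm q) := by
    fun_prop
  rw [← lintegral_indicator_one hS, ← Complex.lintegral_comp_polarCoord_symm,
    polarCoord_target, Measure.volume_eq_prod, setLIntegral_prod _ hint.aemeasurable]
  refine setLIntegral_congr_fun measurableSet_Ioi fun ρ _ => ?_
  have hsec : MeasurableSet {θ | Complex.polarCoord.symm (ρ, θ) ∈ S} :=
    hS.preimage (hsymm.comp measurable_prodMk_left)
  simp_rw [smul_eq_mul]
  rw [lintegral_const_mul' _ _ ENNReal.ofReal_ne_top, ← Measure.restrict_apply hsec,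
    ← lintegral_indicator_one hsec]
  rfl

theorem Complex.polarCoord_symm_mem_closedBall_inter_closedBall_iff {R s r ρ θ : ℝ}
    (hR : 0 < R) (hs : 0 ≤ s) (hρ : 0 < ρ) :
    Complex.polarCoord.symm (ρ, θ) ∈ closedBall (0 : ℂ) r ∩ closedBall (R : ℂ) s ↔
      ρ ≤ r ∧ (R ^ 2 + ρ ^ 2 - s ^ 2) / (2 * R * ρ) ≤ Real.cos θ := by
  have hdist : dist (Complex.polarCoord.symm (ρ, θ)) (R : ℂ) ^ 2 =
      (ρ ^ 2 - 2 * R * ρ * Real.cos θ + R ^ 2 : ℝ) := by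
    rw [Complex.dist_eq, Complex.sq_norm, Complex.normSq_apply]
    simp only [Complex.polarCoord_symm_apply, Complex.sub_re, Complex.sub_im, Complex.mul_re,
      Complex.mul_im, Complex.add_re, Complex.add_im, Complex.ofReal_re, Complex.ofReal_im,
      Complex.I_re, Complex.I_im]
    linear_combination ρ ^ 2 * Real.sin_sq_add_cos_sq θ
  rw [mem_inter_iff, mem_closedBall, mem_closedBall, dist_zero_right, Complex.norm_polarCoord_symm,
    abs_of_pos hρ, ← sq_le_sq₀ dist_nonneg hs, hdist, div_le_iff₀ (by positivity)]
  constructor <;> rintro ⟨h₁, h₂⟩ <;> exact ⟨h₁, by linarith⟩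

/-- Length of the arc of the circle `‖z‖ = ρ` inside `closedBall (R : ℂ) s`, for `R, ρ > 0`
(law of cosines). -/
noncomputable def arcLengthInDisk (R s ρ : ℝ) : ℝ :=
  2 * ρ * arccos ((R ^ 2 + ρ ^ 2 - s ^ 2) / (2 * R * ρ))

theorem volume_closedBall_zero_inter_closedBall {R s : ℝ} (hR : 0 < R) (hs : 0 ≤ s) (r : ℝ) :
    volume (closedBall (0 : ℂ) r ∩ closedBall (R : ℂ) s) =
      ∫⁻ ρ in Ioc 0 r, ENNReal.ofReal (arcLengthInDisk R s ρ) := by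
  rw [Complex.volume_eq_setLIntegral_polarCoord
      (measurableSet_closedBall.inter measurableSet_closedBall),
    ← Ioi_inter_Iic, inter_comm (Ioi 0), ← setLIntegral_indicator measurableSet_Iic]
  refine setLIntegral_congr_fun measurableSet_Ioi fun ρ (hρ : 0 < ρ) => ?_
  simp_rw [Complex.polarCoord_symm_mem_closedBall_inter_closedBall_iff hR hs hρ, ofPred_and]
  by_cases hρr : ρ ≤ r
  · simp only [indicator_of_mem (mem_Iic.mpr hρr), hρr, ofPred_true, univ_inter,
      volume_setOf_le_cos_inter_Ioo, ← ENNReal.ofReal_mul hρ.le, arcLengthInDisk]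
    ring_nf
  · simp [hρr]

theorem arcLengthInDisk_nonneg (R s : ℝ) {ρ : ℝ} (hρ : 0 ≤ ρ) : 0 ≤ arcLengthInDisk R s ρ :=
  mul_nonneg (by positivity) (arccos_nonneg _)

theorem measurable_arcLengthInDisk (R s : ℝ) : Measurable (arcLengthInDisk R s) :=
  (measurable_const.mul measurable_id).mul (continuous_arccos.measurable.comp (by fun_prop))

theorem continuousAt_arcLengthInDisk {R s ρ : ℝ} (hR : R ≠ 0) (hρ : ρ ≠ 0) :
    ContinuousAt (arcLengthInDisk R s) ρ := by
  unfold arcLengthInDisk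
  fun_prop (disch := positivity)

theorem intervalIntegrable_arcLengthInDisk (R s a b : ℝ) :
    IntervalIntegrable (arcLengthInDisk R s) volume a b := by
  have hbound (ρ : ℝ) : ‖arcLengthInDisk R s ρ‖ ≤ ‖2 * π * ρ‖ := by
    simp only [arcLengthInDisk, norm_mul, Real.norm_eq_abs, abs_two, abs_of_pos pi_pos,
      abs_of_nonneg (arccos_nonneg _)]
    nlinarith [arccos_le_pi ((R ^ 2 + ρ ^ 2 - s ^ 2) / (2 * R * ρ)), abs_nonneg ρ]
  exact (continuous_const_mul (2 * π)).intervalIntegrable a b |>.mono_fun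
    (measurable_arcLengthInDisk R s).aestronglyMeasurable (ae_of_all _ hbound)

theorem toReal_volume_closedBall_zero_inter_closedBall {R s r : ℝ} (hR : 0 < R) (hs : 0 ≤ s)
    (hr : 0 ≤ r) :
    (volume (closedBall (0 : ℂ) r ∩ closedBall (R : ℂ) s)).toReal =
      ∫ ρ in 0..r, arcLengthInDisk R s ρ := by
  rw [volume_closedBall_zero_inter_closedBall hR hs, intervalIntegral.integral_of_le hr,
    ← ofReal_integral_eq_lintegral_ofReal (intervalIntegrable_arcLengthInDisk R s 0 r).1
      (ae_restrict_of_forall_mem measurableSet_Ioc fun ρ hρ =>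
        arcLengthInDisk_nonneg R s hρ.1.le),
    ENNReal.toReal_ofReal (setIntegral_nonneg measurableSet_Ioc fun ρ hρ =>
        arcLengthInDisk_nonneg R s hρ.1.le)]

theorem hasDerivAt_toReal_volume_closedBall_zero_inter_closedBall {R s r : ℝ} (hR : 0 < R)
    (hs : 0 ≤ s) (hr : 0 < r) :
    HasDerivAt (fun r => (volume (closedBall (0 : ℂ) r ∩ closedBall (R : ℂ) s)).toReal)
      (arcLengthInDisk R s r) r := by
  have hFTC := intervalIntegral.integral_hasDerivAt_right
    (intervalIntegrable_arcLengthInDisk R s 0 r)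
    (measurable_arcLengthInDisk R s).aestronglyMeasurable.stronglyMeasurableAtFilter
    (continuousAt_arcLengthInDisk hR.ne' hr.ne')
  refine hFTC.congr_of_eventuallyEq ?_
  filter_upwards [Ioi_mem_nhds hr] with r' hr'
  exact toReal_volume_closedBall_zero_inter_closedBall hR hs (le_of_lt hr')

theorem uniform_disk_distance_density_inside_large_general
    (c p : EuclideanSpace ℝ (Fin 2)) (r_c : ℝ) (hrc : 0 < r_c)
    (R : ℝ) (hR : R = dist p c) (hin : R ≤ r_c) (hRpos : 0 < R)
    (μ : Measure (EuclideanSpace ℝ (Fin 2)))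
    (hμ : μ = (ENNReal.ofReal (π * r_c ^ 2))⁻¹ •
      (volume.restrict (Metric.closedBall c r_c)))
    (F : ℝ → ℝ) (hF : ∀ r, F r = (μ {x | dist x p ≤ r}).toReal)
    (r : ℝ) (hr₁ : r_c - R < r) :
    HasDerivAt F (2 * r / (π * r_c ^ 2) *
      Real.arccos ((R ^ 2 + r ^ 2 - r_c ^ 2) / (2 * R * r))) r := by
  have hF' : F = fun r => (π * r_c ^ 2)⁻¹ *
      (volume (closedBall (0 : ℂ) r ∩ closedBall (R : ℂ) r_c)).toReal := by
    funext r
    rw [hF, hμ, Measure.smul_apply, Measure.restrict_apply' measurableSet_closedBall,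
      show {x | dist x p ≤ r} = closedBall p r from rfl,
      volume_closedBall_inter_closedBall_eq_complex finrank_euclideanSpace_fin, ← hR, smul_eq_mul,
      ENNReal.toReal_mul, ENNReal.toReal_inv, ENNReal.toReal_ofReal (by positivity)]
  rw [hF']
  refine ((hasDerivAt_toReal_volume_closedBall_zero_inter_closedBall hRpos hrc.le
    (by linarith : 0 < r)).const_mul (π * r_c ^ 2)⁻¹).congr_deriv ?_
  rw [arcLengthInDisk]
  ring

/-- Lemma 1 of the paper, case `R ≤ r_c`, large-distance regime.
Let `X` be a point uniformly distributed on the closed disk of center `c` and radius `r_c`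
in `ℝ²`. If the reference point `p` lies inside the disk (`0 < R := dist p c ≤ r_c`), then
the CDF `F r = P(dist X p ≤ r)` is differentiable at every `r ∈ (r_c − R, r_c + R)` with
derivative `(2 r / (π r_c²)) · arccos ((R² + r² − r_c²) / (2 R r))`. -/
theorem uniform_disk_distance_density_inside_large
    (c p : EuclideanSpace ℝ (Fin 2)) (r_c : ℝ) (hrc : 0 < r_c)
    (R : ℝ) (hR : R = dist p c) (hin : R ≤ r_c) (hRpos : 0 < R)
    (μ : Measure (EuclideanSpace ℝ (Fin 2)))
    (hμ : μ = (ENNReal.ofReal (π * r_c ^ 2))⁻¹ •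
      (volume.restrict (Metric.closedBall c r_c)))
    (F : ℝ → ℝ) (hF : ∀ r, F r = (μ {x | dist x p ≤ r}).toReal)
    (r : ℝ) (hr₁ : r_c - R < r) (hr₂ : r < r_c + R) :
    HasDerivAt F (2 * r / (π * r_c ^ 2) *
      Real.arccos ((R ^ 2 + r ^ 2 - r_c ^ 2) / (2 * R * r))) r :=
  uniform_disk_distance_density_inside_large_general c p r_c hrc R hR hin hRpos μ hμ F hF r hr₁
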